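/- Let a ≠ 0, μ ≠ 0, ω, E, K be real parameters, and let u, v, z be real numbers with z² = μu + 6K (so that u = (z²−6K)/μ). Then the separated relation (f(v,u) − E)² − μu/6 = K holds if and only if 96a⁴v² = 12a²E − 27ω³ + (9ω²/μ)(z²−6K) + (3ω/μ²)(z²−6K)² − (1/μ³)(z²−6K)³ + 2√6·a²·z or 96a⁴v² = 12a²E − 27ω³ + (9ω²/μ)(z²−6K) + (3ω/μ²)(z²−6K)² − (1/μ³)(z²−6K)³ − 2√6·a²·z. In particular, on the two-sheeted covering z² = μu + 6K the separated curve takes the hyperelliptic form v² = Π₆(z) with Π₆ a polynomial of degree 6 in z. -/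
import Mathlib


/-- `f(v,u) = (96a⁴v² + 27ω³ − 9ω²u − 3ωu² + u³)/(12a²)`. -/
noncomputable def fKK (a ω : ℝ) (v u : ℝ) : ℝ :=
  (96*a^4*v^2 + 27*ω^3 - 9*ω^2*u - 3*ω*u^2 + u^3) / (12*a^2)

/-- on the two-sheeted covering `z² = μu + 6K`, the Kaup–Kupershmidt separated
relation `(f(v,u) − E)² − μu/6 = K` is equivalent to the hyperelliptic-form equation
`96a⁴v² = 12a²E − 27ω³ + (9ω²/μ)(z²−6K) + (3ω/μ²)(z²−6K)² − (1/μ³)(z²−6K)³ ± 2√6·a²·z`. -/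
theorem KK_covering_hyperelliptic (a ω μ E K : ℝ) (ha : a ≠ 0) (hμ : μ ≠ 0)
    (u v z : ℝ) (hz : z^2 = μ*u + 6*K) :
    ((fKK a ω v u - E)^2 - μ*u/6 = K)
      ↔ (96*a^4*v^2
            = 12*a^2*E - 27*ω^3 + (9*ω^2/μ)*(z^2 - 6*K)
              + (3*ω/μ^2)*(z^2 - 6*K)^2 - (1/μ^3)*(z^2 - 6*K)^3
              + 2*Real.sqrt 6*a^2*z
        ∨ 96*a^4*v^2
            = 12*a^2*E - 27*ω^3 + (9*ω^2/μ)*(z^2 - 6*K)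
              + (3*ω/μ^2)*(z^2 - 6*K)^2 - (1/μ^3)*(z^2 - 6*K)^3
              - 2*Real.sqrt 6*a^2*z) := by
  have hu : z^2 - 6*K = μ*u := by linarith
  set s := Real.sqrt 6 with hs
  have hs2 : s^2 = 6 := Real.sq_sqrt (by norm_num)
  have hsne : s ≠ 0 := ne_of_gt (Real.sqrt_pos.mpr (by norm_num))
  have ha2 : (12:ℝ)*a^2 ≠ 0 := by positivity
  rw [hu]
  have e1 : (9*ω^2/μ)*(μ*u) = 9*ω^2*u := by field_simp
  have e2 : (3*ω/μ^2)*(μ*u)^2 = 3*ω*u^2 := by field_simp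
  have e3 : (1/μ^3)*(μ*u)^3 = u^3 := by field_simp
  rw [e1, e2, e3]
  have h1 : ((fKK a ω v u - E)^2 - μ*u/6 = K) ↔ (fKK a ω v u - E)^2 = (z/s)^2 := by
    constructor
    · intro h
      have : (fKK a ω v u - E)^2 = z^2/6 := by rw [hz]; linarith
      rw [this, div_pow, hs2]
    · intro h
      rw [div_pow, hs2, hz] at h
      linarith
  have key : ∀ t : ℝ, (fKK a ω v u - E = t/s)
      ↔ (96*a^4*v^2 = 12*a^2*E - 27*ω^3 + 9*ω^2*u + 3*ω*u^2 - u^3 + 2*s*a^2*t) := by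
    intro t
    unfold fKK
    constructor
    · intro h
      field_simp at h
      linear_combination (s/6)*h
        - ((96*a^4*v^2+27*ω^3-9*ω^2*u-3*ω*u^2+u^3-12*a^2*E)/6)*hs2
    · intro h
      field_simp
      linear_combination s*h + 2*a^2*t*hs2
  rw [h1, sq_eq_sq_iff_eq_or_eq_neg, ← neg_div, key z, key (-z)]
  constructor <;> rintro (h | h)
  · left; linarith
  · right; linarith
  · left; linarith
  · right; linarith
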